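/- arXiv:1206.6940 — 2 statements merged into one kernel-verified Lean document; each statement's English description precedes it below -/
import Mathlib

section
/- Let α, β, γ ∈ R^n be such that lt(ᾱ) divides lt(β̄) and the sig-lead ratio of γ exceeds the sig-lead ratios of both α and β, i.e., sig(γ)/lt(γ̄) > sig(α)/lt(ᾱ) and sig(γ)/lt(γ̄) > sig(β)/lt(β̄) as Laurent module terms. Then sig(spair(α, γ)) divides sig(spair(β, γ)). -/
/-! Under the ratio hypothesis the signature of `spair(α, γ)` is the `γ`-side term
`(lt ᾱ / d) · sig γ = (lcm(lt ᾱ, lt γ̄) / lt γ̄) · sig γ`, and likewise for `β`. Since `lt ᾱ ∣ lt β̄`,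
`lcm(lt ᾱ, lt γ̄)` divides `lcm(lt β̄, lt γ̄)`, and their quotient is the required monomial. -/

section LaurentAction

variable {n : ℕ} {μ : Type*} [LinearOrder μ] {act : (Fin n → ℤ) → μ → μ}

theorem act_lt_act_iff (hmono : ∀ u (s t : μ), s ≤ t ↔ act u s ≤ act u t)
    (u : Fin n → ℤ) (s t : μ) : s < t ↔ act u s < act u t := by
  simp only [lt_iff_le_not_ge, ← hmono]

/-- Both cofactors are `lcm / lead term`, so the spair's signature is found by multiplying
the ratio inequality by the lcm, with exponent `max x y`. -/
theorem max_spair_sig_eq_of_ratio_lt (hact : ∀ u v s, act (u + v) s = act u (act v s))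
    (hmono : ∀ u (s t : μ), s ≤ t ↔ act u s ≤ act u t)
    {x y : Fin n → ℤ} {S T : μ} (h : act (-x) S < act (-y) T) :
    max (act (fun i => y i - min (x i) (y i)) S) (act (fun i => x i - min (x i) (y i)) T)
      = act (fun i => x i - min (x i) (y i)) T := by
  have hS : (fun i => y i - min (x i) (y i)) = (fun i => max (x i) (y i)) + -x := by
    funext i; simp only [Pi.add_apply, Pi.neg_apply]; omega
  have hT : (fun i => x i - min (x i) (y i)) = (fun i => max (x i) (y i)) + -y := by
    funext i; simp only [Pi.add_apply, Pi.neg_apply]; omega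
  rw [hS, hT, hact, hact]
  exact max_eq_right ((act_lt_act_iff hmono _ _ _).mp h).le

end LaurentAction

theorem stmt_14_general (n : ℕ) (μ : Type*) [LinearOrder μ]
    (act : (Fin n → ℤ) → μ → μ)
    (hact : ∀ u v s, act (u + v) s = act u (act v s))
    (hmono : ∀ u (s t : μ), s ≤ t ↔ act u s ≤ act u t)
    (Sα Sβ Sγ : μ) (a b c : Fin n → ℤ)
    (hdvd : ∀ i, a i ≤ b i)
    (hratioα : act (-a) Sα < act (-c) Sγ)
    (hratioβ : act (-b) Sβ < act (-c) Sγ) :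
    ∃ w : Fin n → ℤ, (∀ i, 0 ≤ w i) ∧
      act w (max (act (fun i => c i - min (a i) (c i)) Sα)
                 (act (fun i => a i - min (a i) (c i)) Sγ))
        = max (act (fun i => c i - min (b i) (c i)) Sβ)
              (act (fun i => b i - min (b i) (c i)) Sγ) := by
  refine ⟨fun i => (b i - min (b i) (c i)) - (a i - min (a i) (c i)),
    fun i => by have := hdvd i; dsimp only; omega, ?_⟩
  rw [max_spair_sig_eq_of_ratio_lt hact hmono hratioα,
    max_spair_sig_eq_of_ratio_lt hact hmono hratioβ, ← hact]
  congr 1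
  funext i
  exact sub_add_cancel _ _

/-- High ratio base divisor criterion (Theorem 3.2).  Module terms form a
linearly ordered type `μ` acted on by Laurent monomials (exponent vectors in
`ℤ^n`), the action being additive and order-preserving.  `Sα, Sβ, Sγ` are the
signatures and `a, b, c` the lead-term exponent vectors of `α, β, γ`.  If
`lt ᾱ ∣ lt β̄` (componentwise `a ≤ b`) and the sig-lead ratio of `γ` exceeds
those of `α` and `β`, then `sig (spair α γ)` divides `sig (spair β γ)`, where
`sig (spair α γ) = max ((lt γ̄ / d)·Sα) ((lt ᾱ / d)·Sγ)` with
`d = gcd (lt ᾱ) (lt γ̄)`, and divisibility means reachability by the action of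
a monomial with nonnegative exponents. -/
theorem stmt_14 (n : ℕ) (μ : Type*) [LinearOrder μ]
    (act : (Fin n → ℤ) → μ → μ)
    (hact : ∀ u v s, act (u + v) s = act u (act v s))
    (hact0 : ∀ s, act 0 s = s)
    (hmono : ∀ u (s t : μ), s ≤ t ↔ act u s ≤ act u t)
    (Sα Sβ Sγ : μ) (a b c : Fin n → ℤ)
    (hdvd : ∀ i, a i ≤ b i)
    (hratioα : act (-a) Sα < act (-c) Sγ)
    (hratioβ : act (-b) Sβ < act (-c) Sγ) :
    ∃ w : Fin n → ℤ, (∀ i, 0 ≤ w i) ∧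
      act w (max (act (fun i => c i - min (a i) (c i)) Sα)
                 (act (fun i => a i - min (a i) (c i)) Sγ))
        = max (act (fun i => c i - min (b i) (c i)) Sβ)
              (act (fun i => b i - min (b i) (c i)) Sγ) :=
  stmt_14_general n μ act hact hmono Sα Sβ Sγ a b c hdvd hratioα hratioβ
end

section
/- Consider the function f(g, s·x^v·e_i) = lt(g)·y_i^v·y_{i,1} from pairs of a nonzero polynomial g ∈ R = k[x_1,...,x_k] and a module term s·x^v·e_i ∈ R^m (s a nonzero scalar) into the polynomial ring R' = k[x_1,...,x_k, y_{i,j} : 1 ≤ i ≤ m, 1 ≤ j ≤ k], where y_i^v denotes Π_j y_{i,j}^{v_j}. Then f(g, T) divides f(g', T') if and only if both lt(g) divides lt(g') and T divides T'. -/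
/-!
The exponent vector of `f(g, s·x^v·e_i)` splits into the `x`-part `lt g` and the
`y`-part, which lives on the block of variables `y_{i,·}` only.  The extra factor
`y_{i,1}` makes that block nonzero even for `v = 0`, so divisibility of the
`y`-parts forces the components to agree, after which it is divisibility of `x^v`.
-/

section TermExponent

variable {σ ι : Type*} [DecidableEq σ] [DecidableEq ι]

/-- Exponent of `y_i^v · y_{i,j₀}` on the variables `y_{i',j}`, indexed by `(i', j)`. -/
def termExponent (j₀ : σ) (i : ι) (v : σ → ℕ) : ι × σ → ℕ :=
  fun p => if p.1 = i then v p.2 + if p.2 = j₀ then 1 else 0 else 0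

theorem termExponent_le_termExponent_iff {j₀ : σ} {i i' : ι} {v v' : σ → ℕ} :
    termExponent j₀ i v ≤ termExponent j₀ i' v' ↔ i = i' ∧ v ≤ v' := by
  constructor
  · intro h
    obtain rfl : i = i' := by
      by_contra hne
      simpa [termExponent, hne] using h (i, j₀)
    refine ⟨rfl, fun j => ?_⟩
    simpa [termExponent] using h (i, j)
  · rintro ⟨rfl, hv⟩ ⟨i'', j⟩
    simp only [termExponent]
    split_ifs <;> simp [hv j]

end TermExponent

/-- The encoding monomial `f(g, s·x^v·e_i) = lt(g)·y_i^v·y_{i,1}` used in the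
termination proof.  Monomials of `R = k[x_0,…,x_k]` are exponent vectors
`Fin (k+1) → ℕ`; a module term of `R^m` is a pair `(i, v)` of a component and
an exponent vector (the nonzero scalar `s` is irrelevant to divisibility);
`R' = k[x, y_{i,j}]` has monomials indexed by `Fin (k+1) ⊕ (Fin m × Fin (k+1))`.
Divisibility of monomials is componentwise `≤`; divisibility of module terms
requires equal components and componentwise `≤`.  Then `f(g,T) ∣ f(g',T')` iff
`lt g ∣ lt g'` and `T ∣ T'`. -/
theorem stmt_19 (k m : ℕ)
    (f : (Fin (k+1) → ℕ) → (Fin m × (Fin (k+1) → ℕ)) →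
        (Fin (k+1) ⊕ (Fin m × Fin (k+1))) → ℕ)
    (hf : ∀ (l : Fin (k+1) → ℕ) (i : Fin m) (v : Fin (k+1) → ℕ),
      (∀ j, f l (i, v) (Sum.inl j) = l j) ∧
      (∀ (i' : Fin m) (j : Fin (k+1)),
        f l (i, v) (Sum.inr (i', j)) =
          if i' = i then v j + (if j = 0 then 1 else 0) else 0))
    (l l' : Fin (k+1) → ℕ) (i i' : Fin m) (v v' : Fin (k+1) → ℕ) :
    ((∀ w, f l (i, v) w ≤ f l' (i', v') w) ↔
      ((∀ j, l j ≤ l' j) ∧ (i = i' ∧ ∀ j, v j ≤ v' j))) := by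
  have hf_eq : ∀ l i v, f l (i, v) = Sum.elim l (termExponent 0 i v) := by
    intro l i v
    funext w
    rcases w with j | ⟨i', j⟩
    · exact (hf l i v).1 j
    · exact (hf l i v).2 i' j
  rw [← Pi.le_def, hf_eq, hf_eq, Sum.elim_le_elim_iff, termExponent_le_termExponent_iff]
  rfl
end
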